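/- Let W be a set of positive integers with associated pairs (ε_m, δ_m), 0 ≤ ε_m < δ_m ≤ 1, and let Wᵢ ⊆ W_{i+1} ⊆ W with Mᵢ = lcm(Wᵢ) dividing M_{i+1} = lcm(W_{i+1}); write p = M_{i+1}/Mᵢ and U = W_{i+1} \ Wᵢ. Suppose Iᵢ is a finite collection of pairwise disjoint subintervals of [0, Mᵢ) whose union equals Bad(Wᵢ) ∩ [0, Mᵢ). Then Bad(W_{i+1}) ∩ [0, M_{i+1}) = ⋃_{I ∈ Iᵢ} ⋃_{k=0}^{p−1} ((k·Mᵢ + I) ∩ Bad(U)). -/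
import Mathlib


/-- The quotient `Q(x,m) = ⌊x/m⌋`. -/
noncomputable def quo (x : ℝ) (m : ℕ) : ℤ := ⌊x / m⌋

/-- The remainder `R(x,m) = x − Q(x,m)·m ∈ [0,m)`. -/
noncomputable def rem (x : ℝ) (m : ℕ) : ℝ := x - quo x m * m

/-- The bad set `Bad(m,ε,δ) = {x ∈ ℝ : R(x,m) ∉ [ε·m, δ·m)}`. -/
def Bad (m : ℕ) (ε δ : ℝ) : Set ℝ := {x | rem x m ∉ Set.Ico (ε * m) (δ * m)}

/-- `Bad(W) = ⋂_{m ∈ W} Bad(m, ε_m, δ_m)`. -/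
def BadW (W : Finset ℕ) (ε δ : ℕ → ℝ) : Set ℝ := ⋂ m ∈ W, Bad m (ε m) (δ m)

lemma rem_add_int_mul (x : ℝ) (m : ℕ) (hm : 0 < m) (j : ℤ) :
    rem (x + j * m) m = rem x m := by
  have hm' : (m : ℝ) ≠ 0 := by exact_mod_cast hm.ne'
  unfold rem quo
  have h : (x + j * m) / m = x / m + j := by field_simp
  rw [h, Int.floor_add_intCast]
  push_cast
  ring

lemma bad_add_int_mul (x : ℝ) (m : ℕ) (hm : 0 < m) (j : ℤ) (ε δ : ℝ) :
    x + j * m ∈ Bad m ε δ ↔ x ∈ Bad m ε δ := by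
  simp [Bad, rem_add_int_mul x m hm j]

lemma badW_add_int_mul (V : Finset ℕ) (hpos : ∀ m ∈ V, 0 < m) (M : ℕ)
    (hdvd : ∀ m ∈ V, m ∣ M) (x : ℝ) (j : ℤ) (ε δ : ℕ → ℝ) :
    x + j * M ∈ BadW V ε δ ↔ x ∈ BadW V ε δ := by
  simp only [BadW, Set.mem_iInter]
  refine forall_congr' fun m => forall_congr' fun hm => ?_
  obtain ⟨c, hc⟩ := hdvd m hm
  have h : x + (j : ℝ) * M = x + (j * c : ℤ) * m := by push_cast [hc]; ring
  rw [h, bad_add_int_mul x m (hpos m hm) (j * c)]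

lemma badW_anti {A B : Finset ℕ} (h : A ⊆ B) (ε δ : ℕ → ℝ) :
    BadW B ε δ ⊆ BadW A ε δ := by
  intro x hx
  simp only [BadW, Set.mem_iInter] at *
  exact fun m hm => hx m (h hm)

lemma badW_union (A B : Finset ℕ) (ε δ : ℕ → ℝ) :
    BadW (A ∪ B) ε δ = BadW A ε δ ∩ BadW B ε δ := by
  ext x
  simp only [BadW, Set.mem_iInter, Set.mem_inter_iff, Finset.mem_union]
  constructor
  · exact fun h => ⟨fun m hm => h m (Or.inl hm), fun m hm => h m (Or.inr hm)⟩
  · rintro ⟨h1, h2⟩ m (hm | hm)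
    exacts [h1 m hm, h2 m hm]

/-- The pullback step in a tower: if `Bad(Wᵢ) ∩ [0,Mᵢ)` is a disjoint union of
intervals `I ∈ Iᵢ`, then `Bad(W_{i+1}) ∩ [0,M_{i+1})` is the union over
`I ∈ Iᵢ` and `0 ≤ k < M_{i+1}/Mᵢ` of `(k·Mᵢ + I) ∩ Bad(W_{i+1} \ Wᵢ)`. -/
theorem bad_tower_step (W : Finset ℕ) (hpos : ∀ m ∈ W, 0 < m)
    (ε δ : ℕ → ℝ) (hεδ : ∀ m ∈ W, 0 ≤ ε m ∧ ε m < δ m ∧ δ m ≤ 1)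
    (Wi Wi1 : Finset ℕ) (hsub1 : Wi ⊆ Wi1) (hsub2 : Wi1 ⊆ W)
    (hdvd : Wi.lcm id ∣ Wi1.lcm id)
    (𝓘 : Finset (Set ℝ))
    (hint : ∀ I ∈ 𝓘, I ⊆ Set.Ico (0 : ℝ) ((Wi.lcm id : ℕ) : ℝ) ∧ I.OrdConnected)
    (hdisj : (𝓘 : Set (Set ℝ)).Pairwise Disjoint)
    (hunion : ⋃ I ∈ 𝓘, I = BadW Wi ε δ ∩ Set.Ico (0 : ℝ) ((Wi.lcm id : ℕ) : ℝ)) :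
    BadW Wi1 ε δ ∩ Set.Ico (0 : ℝ) ((Wi1.lcm id : ℕ) : ℝ) =
      ⋃ I ∈ 𝓘, ⋃ k ∈ Finset.range (Wi1.lcm id / Wi.lcm id),
        ((fun x : ℝ => (k : ℝ) * ((Wi.lcm id : ℕ) : ℝ) + x) '' I)
          ∩ BadW (Wi1 \ Wi) ε δ := by
  set Mi := Wi.lcm id with hMi
  set Mi1 := Wi1.lcm id with hMi1
  have hposWi : ∀ m ∈ Wi, 0 < m := fun m hm => hpos m (hsub2 (hsub1 hm))
  have hposWi1 : ∀ m ∈ Wi1, 0 < m := fun m hm => hpos m (hsub2 hm)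
  have hposU : ∀ m ∈ Wi1 \ Wi, 0 < m := fun m hm =>
    hposWi1 m (Finset.mem_sdiff.mp hm).1
  have lcm_pos : ∀ (V : Finset ℕ), (∀ m ∈ V, 0 < m) → 0 < V.lcm id := by
    intro V hV
    rw [Nat.pos_iff_ne_zero]
    intro h0
    rw [Finset.lcm_eq_zero_iff] at h0
    simp only [Set.mem_image, id_eq, Finset.mem_coe] at h0
    obtain ⟨m, hm, hm0⟩ := h0
    exact (hV m hm).ne' hm0
  have hMipos : 0 < Mi := lcm_pos Wi hposWi
  have hMi1pos : 0 < Mi1 := lcm_pos Wi1 hposWi1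
  have hMireal : (0:ℝ) < (Mi:ℝ) := by exact_mod_cast hMipos
  have hp : (Mi1 / Mi) * Mi = Mi1 := Nat.div_mul_cancel hdvd
  have hdvdWi : ∀ m ∈ Wi, m ∣ Mi := fun m hm => Finset.dvd_lcm hm
  have hsplit : ∀ z : ℝ, z ∈ BadW Wi1 ε δ ↔
      z ∈ BadW Wi ε δ ∧ z ∈ BadW (Wi1 \ Wi) ε δ := by
    intro z
    rw [← Set.mem_inter_iff, ← badW_union, Finset.union_sdiff_of_subset hsub1]
  ext x
  simp only [Set.mem_inter_iff, Set.mem_iUnion, Set.mem_image, Set.mem_Ico,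
    Finset.mem_range, exists_prop]
  constructor
  · rintro ⟨hxB, hx0, hx1⟩
    obtain ⟨hxWi, hxU⟩ := (hsplit x).mp hxB
    set k : ℤ := ⌊x / (Mi:ℝ)⌋ with hk
    have hk0 : 0 ≤ k := Int.floor_nonneg.mpr (div_nonneg hx0 hMireal.le)
    have hklt : k < ((Mi1 / Mi : ℕ) : ℤ) := by
      have h1 : x / (Mi:ℝ) < ((Mi1 / Mi : ℕ) : ℝ) := by
        rw [div_lt_iff₀ hMireal]
        calc x < (Mi1:ℝ) := hx1
        _ = ((Mi1 / Mi : ℕ) : ℝ) * Mi := by exact_mod_cast hp.symm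
      exact Int.floor_lt.mpr h1
    set y : ℝ := x - k * Mi with hy
    have hfl : (k:ℝ) ≤ x / Mi := Int.floor_le _
    have hfl2 : x / Mi < (k:ℝ) + 1 := Int.lt_floor_add_one _
    have hy0 : 0 ≤ y := by
      have : (k:ℝ) * Mi ≤ x := by
        rw [← le_div_iff₀ hMireal]; exact hfl
      simpa [hy] using this
    have hy1 : y < Mi := by
      have : x < ((k:ℝ) + 1) * Mi := by
        rw [← div_lt_iff₀ hMireal]; exact hfl2
      simp only [hy]; nlinarith
    have hyWi : y ∈ BadW Wi ε δ := by
      have := (badW_add_int_mul Wi hposWi Mi hdvdWi y k ε δ)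
      rw [show y + (k:ℝ) * Mi = x by simp [hy]] at this
      exact this.mp hxWi
    have hyU : y ∈ ⋃ I ∈ 𝓘, I := by
      rw [hunion]; exact ⟨hyWi, hy0, hy1⟩
    simp only [Set.mem_iUnion, exists_prop] at hyU
    obtain ⟨I, hI, hyI⟩ := hyU
    refine ⟨I, hI, k.toNat, ?_, ⟨⟨y, hyI, ?_⟩, hxU⟩⟩
    · omega
    · have hcast : ((k.toNat : ℕ) : ℝ) = (k : ℝ) := by
        exact_mod_cast Int.toNat_of_nonneg hk0
      rw [hcast, hy]; ring
  · rintro ⟨I, hI, k, hk, ⟨y, hyI, hxy⟩, hxU⟩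
    have hyBad : y ∈ BadW Wi ε δ ∧ y ∈ Set.Ico (0:ℝ) (Mi:ℝ) := by
      rw [← Set.mem_inter_iff, ← hunion]
      simp only [Set.mem_iUnion, exists_prop]
      exact ⟨I, hI, hyI⟩
    have hyWi := hyBad.1
    have hy0 := hyBad.2.1
    have hy1 := hyBad.2.2
    have hxWi : x ∈ BadW Wi ε δ := by
      have := (badW_add_int_mul Wi hposWi Mi hdvdWi y (k:ℤ) ε δ).mpr hyWi
      rwa [show y + ((k:ℤ):ℝ) * Mi = x by push_cast; linarith [hxy]] at this
    refine ⟨(hsplit x).mpr ⟨hxWi, hxU⟩, ?_, ?_⟩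
    · rw [← hxy]; positivity
    · rw [← hxy]
      have hk1 : (k:ℝ) + 1 ≤ ((Mi1 / Mi : ℕ) : ℝ) := by exact_mod_cast hk
      have : ((k:ℝ) + 1) * Mi ≤ ((Mi1 / Mi : ℕ) : ℝ) * Mi :=
        mul_le_mul_of_nonneg_right hk1 hMireal.le
      have hM : ((Mi1 / Mi : ℕ) : ℝ) * Mi = (Mi1:ℝ) := by exact_mod_cast hp
      nlinarith
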